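/- arXiv:1802.05560 — 4 statements merged into one kernel-verified Lean document; each statement's English description precedes it below -/
import Mathlib

section
/- Let Ω ⊆ ℝⁿ be open, let Ψ : Ω → ℝ be twice continuously differentiable with ∇Ψ(x) ≠ 0 for every x ∈ Ω, let S = {x ∈ Ω : Ψ(x) = 0}, and let ν(x) = ∇Ψ(x)/‖∇Ψ(x)‖. Let N : Ω → ℝⁿ be continuously differentiable with ‖N(y)‖ = 1 for all y ∈ Ω and N(x) = ν(x) for all x ∈ S. Then the following two conditions are equivalent: (i) (∂_N N)(x) = 0 for all x ∈ S; (ii) ∂_k N_j(x) = ∂_j N_k(x) for all x ∈ S and all j, k ∈ {1,…,n}. -/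
/-- The `k`-th partial derivative of a scalar function on `ℝⁿ`. -/
noncomputable def pder {n : ℕ} (f : EuclideanSpace ℝ (Fin n) → ℝ) (k : Fin n)
    (x : EuclideanSpace ℝ (Fin n)) : ℝ :=
  fderiv ℝ f x (EuclideanSpace.single k 1)

/-!
Write `J = DN(x)` at a point `x ∈ S`. Differentiating `‖N‖² = 1` shows that `J` takes values in
`N(x)ᗮ`. On `S` we have `‖∇Ψ‖ • N = ∇Ψ`; by the implicit function theorem every vector of the
tangent space `∇Ψ(x)ᗮ` lies in the tangent cone of `S`, so differentiating that identity along
tangent vectors gives `‖∇Ψ(x)‖ ⟪J v, u⟫ = ⟪D²Ψ(x) v, u⟫` for tangent `u, v`. Hence `J` is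
symmetric on `N(x)ᗮ = ∇Ψ(x)ᗮ`, and splitting vectors into a tangential part and a multiple of
`N(x)` shows that `J` is symmetric if and only if `J N(x) = 0`. In coordinates these are (ii)
and (i).
-/

open Filter Topology Set RealInnerProductSpace InnerProductSpace

section Linear

variable {E : Type*} [NormedAddCommGroup E] [InnerProductSpace ℝ E]

theorem LinearMap.isSymmetric_iff_inner_basis {ι : Type*} (b : Module.Basis ι ℝ E)
    (T : E →ₗ[ℝ] E) : T.IsSymmetric ↔ ∀ i j, ⟪T (b i), b j⟫ = ⟪b i, T (b j)⟫ := by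
  refine ⟨fun hT i j => hT (b i) (b j), fun h u v => ?_⟩
  have h_forms := LinearMap.ext_basis (B := (innerₗ E).comp T) (B' := (innerₗ E).compl₂ T) b b h
  exact LinearMap.congr_fun₂ h_forms u v

theorem LinearMap.apply_eq_zero_iff_isSymmetric {T : E →ₗ[ℝ] E} {a : E} (ha : ‖a‖ = 1)
    (h_perp : ∀ w, ⟪T w, a⟫ = 0)
    (h_tan : ∀ u v, ⟪a, u⟫ = 0 → ⟪a, v⟫ = 0 → ⟪T u, v⟫ = ⟪u, T v⟫) :
    T a = 0 ↔ T.IsSymmetric := by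
  constructor
  · intro hTa u v
    have h_proj : ∀ w, ⟪a, w - ⟪a, w⟫ • a⟫ = 0 := fun w => by
      rw [inner_sub_right, real_inner_smul_right, real_inner_self_eq_norm_sq, ha]; ring
    have h_reduce : ∀ w z, ⟪T w, z⟫ = ⟪T (w - ⟪a, w⟫ • a), z - ⟪a, z⟫ • a⟫ := fun w z => by
      rw [map_sub, map_smul, hTa, smul_zero, sub_zero, inner_sub_right, real_inner_smul_right,
        h_perp, mul_zero, sub_zero]
    rw [h_reduce u v, real_inner_comm (T v) u, h_reduce v u, h_tan _ _ (h_proj u) (h_proj v),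
      real_inner_comm]
  · intro hT
    refine ext_inner_right ℝ fun w => ?_
    rw [hT, real_inner_comm, h_perp, inner_zero_left]

end Linear

theorem HasFDerivAt.inner_apply_self_eq_zero {E F : Type*} [NormedAddCommGroup E]
    [NormedSpace ℝ E] [NormedAddCommGroup F] [InnerProductSpace ℝ F] {N : E → F}
    {N' : E →L[ℝ] F} {x : E} (hN : HasFDerivAt N N' x) (hunit : ∀ᶠ y in 𝓝 x, ‖N y‖ = 1)
    (v : E) : ⟪N' v, N x⟫ = 0 := by
  have h_const : HasFDerivAt (‖N ·‖ ^ 2) (0 : E →L[ℝ] ℝ) x :=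
    (hasFDerivAt_const (1 : ℝ) x).congr_of_eventuallyEq (hunit.mono fun y hy => by simp [hy])
  have h_zero := congrArg (· v) (hN.norm_sq.unique h_const)
  simp only [two_nsmul, add_apply, ContinuousLinearMap.comp_apply, innerSL_apply_apply,
    zero_apply] at h_zero
  rw [real_inner_comm]; linarith

section Tangent

variable {E F G : Type*} [NormedAddCommGroup E] [NormedSpace ℝ E] [CompleteSpace E]
  [NormedAddCommGroup F] [NormedSpace ℝ F] [FiniteDimensional ℝ F]
  [NormedAddCommGroup G] [NormedSpace ℝ G] {f : E → F} {f' : E →L[ℝ] F} {a : E}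

theorem HasStrictFDerivAt.ker_subset_tangentConeAt_preimage (hf : HasStrictFDerivAt f f' a)
    (hf' : f'.range = ⊤) : (f'.ker : Set E) ⊆ tangentConeAt ℝ (f ⁻¹' {f a}) a := by
  set φ := hf.implicitFunction f f' hf' (f a)
  have hφ : HasFDerivAt φ f'.ker.subtypeL 0 := (hf.to_implicitFunction hf').hasFDerivAt
  have hφ0 : φ 0 = a := hf.implicitFunction_apply_image hf'
  have h_level : {z | f (φ z) = f a} ∈ 𝓝 (0 : f'.ker) :=
    ((continuous_const.prodMk continuous_id).tendsto 0).eventually (hf.map_implicitFunction_eq hf')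
  intro v hv
  have hv_cone : (⟨v, hv⟩ : f'.ker) ∈ tangentConeAt ℝ {z | f (φ z) = f a} 0 := by
    rw [tangentConeAt_of_mem_nhds h_level]; trivial
  have h_cone := hφ.hasFDerivWithinAt.mapsTo_tangent_cone hv_cone
  rw [hφ0] at h_cone
  exact tangentConeAt_mono (image_subset_iff.mpr fun z hz => hz) h_cone

theorem HasStrictFDerivAt.fderiv_apply_eq_zero_of_eventually_eq_zero {g : E → G} {v : E}
    (hf : HasStrictFDerivAt f f' a) (hf' : f'.range = ⊤) (hg : DifferentiableAt ℝ g a)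
    (hzero : ∀ᶠ y in 𝓝 a, f y = f a → g y = 0) (hv : f' v = 0) : fderiv ℝ g a v = 0 := by
  have h_zero_within : HasFDerivWithinAt g (0 : E →L[ℝ] G) (f ⁻¹' {f a}) a :=
    (hasFDerivWithinAt_const (0 : G) a _).congr_of_eventuallyEq
      (eventually_nhdsWithin_iff.mpr hzero) (hzero.self_of_nhds rfl)
  exact hg.hasFDerivAt.hasFDerivWithinAt.unique_on h_zero_within
    (hf.ker_subset_tangentConeAt_preimage hf' hv)

end Tangent

section Gradient

variable {E : Type*} [NormedAddCommGroup E] [InnerProductSpace ℝ E] [CompleteSpace E]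
  {Ψ : E → ℝ} {x : E}

theorem inner_fderiv_gradient_apply (Ψ : E → ℝ) (x v w : E) :
    ⟪fderiv ℝ (gradient Ψ) x v, w⟫ = fderiv ℝ (fderiv ℝ Ψ) x v w := by
  have h_grad : gradient Ψ = (toDual ℝ E).symm ∘ fderiv ℝ Ψ := rfl
  rw [h_grad, LinearIsometryEquiv.comp_fderiv]
  exact toDual_symm_apply

theorem ContDiffAt.isSymmetric_fderiv_gradient (hΨ : ContDiffAt ℝ 2 Ψ x) :
    (fderiv ℝ (gradient Ψ) x : E →ₗ[ℝ] E).IsSymmetric := fun v w => by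
  rw [ContinuousLinearMap.coe_coe, inner_fderiv_gradient_apply, real_inner_comm,
    inner_fderiv_gradient_apply]
  exact hΨ.isSymmSndFDerivAt (by simp) v w

theorem ContDiffAt.differentiableAt_gradient (hΨ : ContDiffAt ℝ 2 Ψ x) :
    DifferentiableAt ℝ (gradient Ψ) x :=
  ((toDual ℝ E).symm.contDiff.contDiffAt.comp x
    (hΨ.fderiv_right (m := 1) (by norm_num))).differentiableAt one_ne_zero

variable {N : E → E}

theorem ContDiffAt.norm_mul_inner_fderiv_apply_of_eq_unitNormal (hΨ : ContDiffAt ℝ 2 Ψ x)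
    (hgrad : gradient Ψ x ≠ 0) (hN : DifferentiableAt ℝ N x)
    (hext : ∀ᶠ y in 𝓝 x, Ψ y = Ψ x → N y = ‖gradient Ψ y‖⁻¹ • gradient Ψ y)
    {u v : E} (hu : ⟪gradient Ψ x, u⟫ = 0) (hv : ⟪gradient Ψ x, v⟫ = 0) :
    ‖gradient Ψ x‖ * ⟪fderiv ℝ N x v, u⟫ = ⟪fderiv ℝ (gradient Ψ) x v, u⟫ := by
  have hG := hΨ.differentiableAt_gradient
  have hG_norm := hG.norm ℝ hgrad
  have h_range : (fderiv ℝ Ψ x).range = ⊤ := by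
    refine Module.Dual.range_eq_top_of_ne_zero fun h => hgrad ?_
    rw [gradient, show fderiv ℝ Ψ x = 0 by exact_mod_cast h, map_zero]
  have h_zero : ∀ᶠ y in 𝓝 x, Ψ y = Ψ x → ‖gradient Ψ y‖ • N y - gradient Ψ y = 0 := by
    filter_upwards [hext] with y hy hy_level
    rcases eq_or_ne (gradient Ψ y) 0 with h | h
    · simp [hy hy_level, h]
    · rw [hy hy_level, smul_inv_smul₀ (norm_ne_zero_iff.mpr h), sub_self]
  have h_deriv := (hΨ.hasStrictFDerivAt (by simp)).fderiv_apply_eq_zero_of_eventually_eq_zero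
    h_range ((hG_norm.smul hN).sub hG) h_zero (by rwa [← inner_gradient_left])
  rw [fderiv_sub (hG_norm.smul hN) hG, fderiv_smul hG_norm hN] at h_deriv
  have h_normal : ⟪N x, u⟫ = 0 := by
    rw [hext.self_of_nhds rfl, real_inner_smul_left, hu, mul_zero]
  have h_inner := congrArg (⟪·, u⟫) h_deriv
  simp only [sub_apply, add_apply, smul_apply, ContinuousLinearMap.smulRight_apply,
    inner_sub_left, inner_add_left, real_inner_smul_left, h_normal, inner_zero_left] at h_inner
  linarith

theorem ContDiffAt.inner_fderiv_apply_comm_of_eq_unitNormal (hΨ : ContDiffAt ℝ 2 Ψ x)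
    (hgrad : gradient Ψ x ≠ 0) (hN : DifferentiableAt ℝ N x)
    (hext : ∀ᶠ y in 𝓝 x, Ψ y = Ψ x → N y = ‖gradient Ψ y‖⁻¹ • gradient Ψ y)
    {u v : E} (hu : ⟪gradient Ψ x, u⟫ = 0) (hv : ⟪gradient Ψ x, v⟫ = 0) :
    ⟪fderiv ℝ N x u, v⟫ = ⟪u, fderiv ℝ N x v⟫ := by
  refine mul_left_cancel₀ (norm_ne_zero_iff.mpr hgrad) ?_
  rw [real_inner_comm (fderiv ℝ N x v) u,
    hΨ.norm_mul_inner_fderiv_apply_of_eq_unitNormal hgrad hN hext hv hu,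
    hΨ.norm_mul_inner_fderiv_apply_of_eq_unitNormal hgrad hN hext hu hv]
  exact (hΨ.isSymmetric_fderiv_gradient u v).trans (real_inner_comm _ _)

end Gradient

section Coordinates

variable {n : ℕ} {N : EuclideanSpace ℝ (Fin n) → EuclideanSpace ℝ (Fin n)}
  {x : EuclideanSpace ℝ (Fin n)}

theorem pder_eq_fderiv_apply (hN : DifferentiableAt ℝ N x) (j k : Fin n) :
    pder (fun y => N y j) k x = fderiv ℝ N x (EuclideanSpace.single k 1) j :=
  congrArg (· (EuclideanSpace.single k 1))
    ((EuclideanSpace.proj j).hasFDerivAt.comp x hN.hasFDerivAt).fderiv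

theorem sum_mul_pder_eq_fderiv_apply (hN : DifferentiableAt ℝ N x)
    (w : EuclideanSpace ℝ (Fin n)) (j : Fin n) :
    ∑ k, w k * pder (fun y => N y j) k x = fderiv ℝ N x w j := by
  conv_rhs => rw [← (EuclideanSpace.basisFun (Fin n) ℝ).sum_repr w]
  simp [pder_eq_fderiv_apply hN]

theorem isSymmetric_fderiv_iff_pder_comm (hN : DifferentiableAt ℝ N x) :
    (fderiv ℝ N x : EuclideanSpace ℝ (Fin n) →ₗ[ℝ] EuclideanSpace ℝ (Fin n)).IsSymmetric ↔
      ∀ j k : Fin n, pder (fun y => N y j) k x = pder (fun y => N y k) j x := by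
  rw [LinearMap.isSymmetric_iff_inner_basis (EuclideanSpace.basisFun (Fin n) ℝ).toBasis,
    forall_comm]
  simp [pder_eq_fderiv_apply hN, EuclideanSpace.inner_single_right,
    EuclideanSpace.inner_single_left]

end Coordinates

/-- For a unitary `C¹` extension `N` of the unit normal field `ν = ∇Ψ/‖∇Ψ‖` of the
hypersurface `S = {Ψ = 0}`, the following are equivalent:
(i) `∂_N N = 0` on `S`; (ii) `∂_k N_j = ∂_j N_k` on `S` for all `j, k`. -/
theorem selfDeriv_zero_iff_symm_jacobian_on_surface {n : ℕ}
    (Ω : Set (EuclideanSpace ℝ (Fin n))) (hΩ : IsOpen Ω)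
    (Ψ : EuclideanSpace ℝ (Fin n) → ℝ) (hΨ : ContDiffOn ℝ 2 Ψ Ω)
    (hgrad : ∀ x ∈ Ω, gradient Ψ x ≠ 0)
    (ν : EuclideanSpace ℝ (Fin n) → EuclideanSpace ℝ (Fin n))
    (hν : ∀ x ∈ Ω, ν x = ‖gradient Ψ x‖⁻¹ • gradient Ψ x)
    (N : EuclideanSpace ℝ (Fin n) → EuclideanSpace ℝ (Fin n))
    (hN : ContDiffOn ℝ 1 N Ω)
    (hunit : ∀ y ∈ Ω, ‖N y‖ = 1)
    (hext : ∀ x ∈ Ω, Ψ x = 0 → N x = ν x) :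
    (∀ x ∈ Ω, Ψ x = 0 →
        ∀ j : Fin n, ∑ k, N x k * pder (fun y => N y j) k x = 0) ↔
    (∀ x ∈ Ω, Ψ x = 0 →
        ∀ j k : Fin n, pder (fun y => N y j) k x = pder (fun y => N y k) j x) := by
  refine forall₂_congr fun x hx => forall_congr' fun hx0 => ?_
  have hΩx : Ω ∈ 𝓝 x := hΩ.mem_nhds hx
  have hNx : DifferentiableAt ℝ N x := (hN.contDiffAt hΩx).differentiableAt one_ne_zero
  have h_normal : N x = ‖gradient Ψ x‖⁻¹ • gradient Ψ x := by rw [hext x hx hx0, hν x hx]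
  have h_tangent : ∀ u, ⟪N x, u⟫ = 0 → ⟪gradient Ψ x, u⟫ = 0 := fun u hu => by
    rw [h_normal, real_inner_smul_left] at hu
    exact (mul_eq_zero.mp hu).resolve_left (inv_ne_zero (norm_ne_zero_iff.mpr (hgrad x hx)))
  have h_perp (w) : ⟪fderiv ℝ N x w, N x⟫ = 0 :=
    hNx.hasFDerivAt.inner_apply_self_eq_zero (eventually_of_mem hΩx hunit) w
  have h_sym_tangent (u v) (hu : ⟪N x, u⟫ = 0) (hv : ⟪N x, v⟫ = 0) :
      ⟪fderiv ℝ N x u, v⟫ = ⟪u, fderiv ℝ N x v⟫ := by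
    refine (hΨ.contDiffAt hΩx).inner_fderiv_apply_comm_of_eq_unitNormal (hgrad x hx) hNx ?_
      (h_tangent u hu) (h_tangent v hv)
    filter_upwards [hΩx] with y hy hy_level
    rw [hext y hy (hy_level.trans hx0), hν y hy]
  simp_rw [sum_mul_pder_eq_fderiv_apply hNx, ← isSymmetric_fderiv_iff_pder_comm hNx,
    ← LinearMap.apply_eq_zero_iff_isSymmetric (hunit x hx) h_perp h_sym_tangent]
  rw [ContinuousLinearMap.coe_coe]
  exact ⟨fun h => PiLp.ext h, fun h j => by simp [h]⟩
end

section
/- Let Ω ⊆ ℝⁿ be open and let N : Ω → ℝⁿ be continuously differentiable with ‖N(y)‖ = 1 and ∂_j N_k(y) = ∂_k N_j(y) for all y ∈ Ω and all j, k. Let I ⊆ ℝ be an interval containing 0 and let γ : I → Ω be differentiable with γ'(τ) = N(γ(τ)) for all τ ∈ I. Then γ is a straight line segment: γ(τ) = γ(0) + τ N(γ(0)) for all τ ∈ I, and N(γ(τ)) = N(γ(0)) for all τ ∈ I. -/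
open scoped InnerProductSpace Topology

theorem Convex.apply_eq_of_hasDerivWithinAt_zero {E : Type*} [NormedAddCommGroup E]
    [NormedSpace ℝ E] {s : Set ℝ} {f : ℝ → E} {x y : ℝ} (hs : Convex ℝ s)
    (hf : ∀ t ∈ s, HasDerivWithinAt f 0 s t) (hx : x ∈ s) (hy : y ∈ s) : f x = f y := by
  have h := hs.norm_image_sub_le_of_norm_hasDerivWithin_le hf (fun _ _ => norm_zero.le) hx hy
  rw [zero_mul, norm_le_zero_iff, sub_eq_zero] at h
  exact h.symm

theorem Convex.eq_add_smul_of_hasDerivWithinAt_const {E : Type*} [NormedAddCommGroup E]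
    [NormedSpace ℝ E] {s : Set ℝ} {γ : ℝ → E} {v : E} (hs : Convex ℝ s) (h0 : (0 : ℝ) ∈ s)
    (hγ : ∀ t ∈ s, HasDerivWithinAt γ v s t) {τ : ℝ} (hτ : τ ∈ s) : γ τ = γ 0 + τ • v := by
  have hderiv (t : ℝ) (ht : t ∈ s) : HasDerivWithinAt (fun t => γ t - t • v) 0 s t := by
    have h := (hγ t ht).sub ((hasDerivWithinAt_id t s).smul_const v)
    rwa [one_smul, sub_self] at h
  have h := hs.apply_eq_of_hasDerivWithinAt_zero hderiv hτ h0
  rw [zero_smul, sub_zero, sub_eq_iff_eq_add] at h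
  rw [h, add_comm]

theorem inner_fderiv_apply_self_eq_zero {E F : Type*} [NormedAddCommGroup E] [NormedSpace ℝ E]
    [NormedAddCommGroup F] [InnerProductSpace ℝ F] {N : E → F} {y : E} {c : ℝ}
    (hN : DifferentiableAt ℝ N y) (hnorm : ∀ᶠ z in 𝓝 y, ‖N z‖ = c) (v : E) :
    ⟪fderiv ℝ N y v, N y⟫_ℝ = 0 := by
  have hconst : HasFDerivAt (‖N ·‖ ^ 2) (0 : E →L[ℝ] ℝ) y :=
    (hasFDerivAt_const (c ^ 2) y).congr_of_eventuallyEq (hnorm.mono fun z hz => by simp [hz])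
  have h := congrArg (· v) (hN.hasFDerivAt.norm_sq.unique hconst)
  simpa [real_inner_comm] using h

theorem fderiv_apply_self_eq_zero_of_isSymmetric {F : Type*} [NormedAddCommGroup F]
    [InnerProductSpace ℝ F] {N : F → F} {y : F} {c : ℝ} (hN : DifferentiableAt ℝ N y)
    (hsymm : (fderiv ℝ N y : F →ₗ[ℝ] F).IsSymmetric) (hnorm : ∀ᶠ z in 𝓝 y, ‖N z‖ = c) :
    fderiv ℝ N y (N y) = 0 :=
  ext_inner_left ℝ fun v => by
    rw [inner_zero_right, ← inner_fderiv_apply_self_eq_zero hN hnorm v]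
    exact (hsymm v (N y)).symm

theorem EuclideanSpace.isSymmetric_of_apply_single_apply_comm {ι : Type*} [Fintype ι]
    [DecidableEq ι] (A : EuclideanSpace ℝ ι →ₗ[ℝ] EuclideanSpace ℝ ι)
    (hA : ∀ j k, A (EuclideanSpace.single k 1) j = A (EuclideanSpace.single j 1) k) :
    A.IsSymmetric := by
  let b := (EuclideanSpace.basisFun ι ℝ).toBasis
  refine (LinearMap.eq_adjoint_iff A A).mp ((LinearMap.eq_adjoint_iff_basis b b A A).mpr ?_)
  intro j k
  simp [b, EuclideanSpace.inner_single_left, EuclideanSpace.inner_single_right, hA j k]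

theorem pder_apply_eq_fderiv_apply {n : ℕ}
    {N : EuclideanSpace ℝ (Fin n) → EuclideanSpace ℝ (Fin n)} {y : EuclideanSpace ℝ (Fin n)}
    (hN : DifferentiableAt ℝ N y) (j k : Fin n) :
    pder (fun z => N z j) k y = fderiv ℝ N y (EuclideanSpace.single k 1) j := by
  have h : fderiv ℝ (fun z => N z j) y = (EuclideanSpace.proj j).comp (fderiv ℝ N y) :=
    ((EuclideanSpace.proj (𝕜 := ℝ) j).hasFDerivAt.comp y hN.hasFDerivAt).fderiv
  rw [pder, h]
  rfl

theorem isSymmetric_fderiv_of_pder_comm {n : ℕ}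
    {N : EuclideanSpace ℝ (Fin n) → EuclideanSpace ℝ (Fin n)} {y : EuclideanSpace ℝ (Fin n)}
    (hN : DifferentiableAt ℝ N y)
    (hsym : ∀ j k : Fin n, pder (fun z => N z j) k y = pder (fun z => N z k) j y) :
    (fderiv ℝ N y : EuclideanSpace ℝ (Fin n) →ₗ[ℝ] EuclideanSpace ℝ (Fin n)).IsSymmetric :=
  EuclideanSpace.isSymmetric_of_apply_single_apply_comm _ fun j k =>
    (pder_apply_eq_fderiv_apply hN j k).symm.trans
      ((hsym j k).trans (pder_apply_eq_fderiv_apply hN k j))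

/-- An integral curve of a proper extension (a `C¹` unit vector field with symmetric
Jacobian) is a straight line segment, along which `N` is constant. -/
theorem integral_curve_of_proper_extension_is_line {n : ℕ}
    (Ω : Set (EuclideanSpace ℝ (Fin n))) (hΩ : IsOpen Ω)
    (N : EuclideanSpace ℝ (Fin n) → EuclideanSpace ℝ (Fin n))
    (hN : ContDiffOn ℝ 1 N Ω)
    (hunit : ∀ y ∈ Ω, ‖N y‖ = 1)
    (hsym : ∀ y ∈ Ω, ∀ j k : Fin n,
      pder (fun z => N z j) k y = pder (fun z => N z k) j y)
    (I : Set ℝ) (hIconv : Convex ℝ I) (h0I : (0 : ℝ) ∈ I)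
    (γ : ℝ → EuclideanSpace ℝ (Fin n))
    (hγΩ : ∀ τ ∈ I, γ τ ∈ Ω)
    (hγ : ∀ τ ∈ I, HasDerivWithinAt γ (N (γ τ)) I τ) :
    ∀ τ ∈ I, γ τ = γ 0 + τ • N (γ 0) ∧ N (γ τ) = N (γ 0) := by
  have hdiff (y : EuclideanSpace ℝ (Fin n)) (hy : y ∈ Ω) : DifferentiableAt ℝ N y :=
    (hN.contDiffAt (hΩ.mem_nhds hy)).differentiableAt one_ne_zero
  have hflow (y : EuclideanSpace ℝ (Fin n)) (hy : y ∈ Ω) : fderiv ℝ N y (N y) = 0 :=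
    fderiv_apply_self_eq_zero_of_isSymmetric (hdiff y hy)
      (isSymmetric_fderiv_of_pder_comm (hdiff y hy) (hsym y hy))
      (Filter.eventually_of_mem (hΩ.mem_nhds hy) hunit)
  have hNγ (τ : ℝ) (hτ : τ ∈ I) : N (γ τ) = N (γ 0) := by
    refine hIconv.apply_eq_of_hasDerivWithinAt_zero (f := N ∘ γ) (fun t ht => ?_) hτ h0I
    have h := (hdiff _ (hγΩ t ht)).hasFDerivAt.comp_hasDerivWithinAt t (hγ t ht)
    rwa [hflow _ (hγΩ t ht)] at h
  intro τ hτ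
  refine ⟨hIconv.eq_add_smul_of_hasDerivWithinAt_const h0I (fun t ht => ?_) hτ, hNγ τ hτ⟩
  rw [← hNγ t ht]
  exact hγ t ht
end

section
/- Let Ω ⊆ ℝⁿ be open, let S ⊆ Ω, and let ν : S → ℝⁿ satisfy ‖ν(x)‖ = 1 for x ∈ S. Suppose every point y ∈ Ω can be written as y = x + t ν(x) for some x ∈ S and t ∈ ℝ such that the segment {x + s ν(x) : s between 0 and t} is contained in Ω. If Φ₁, Φ₂ : Ω → ℝ are twice continuously differentiable, satisfy ‖∇Φᵢ(y)‖ = 1 for all y ∈ Ω, Φᵢ(x) = 0 and ∇Φᵢ(x) = ν(x) for all x ∈ S (i = 1, 2), then Φ₁ = Φ₂ on Ω; in fact Φᵢ(x + tν(x)) = t for every such representation. -/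
/-!
Differentiating `‖∇Φ‖² = 1` and using the symmetry of the Hessian gives
`D(∇Φ)(y) (∇Φ y) = 0`. Hence along the line `s ↦ x + s ∇Φ(x)` the difference
`∇Φ(x + s ∇Φ(x)) - ∇Φ(x)` solves a linear ODE with zero initial value, so by Grönwall the
gradient is constant on the segment and `Φ(x + t ∇Φ(x)) = Φ(x) + t`. On `S` this reads
`Φ(x + t ν(x)) = t`, independently of `Φ`.
-/

open Set Filter Topology InnerProductSpace RealInnerProductSpace

theorem hasDerivAt_add_smul {F : Type*} [NormedAddCommGroup F] [NormedSpace ℝ F] (x v : F)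
    (s : ℝ) : HasDerivAt (fun s : ℝ => x + s • v) v s := by
  simpa using ((hasDerivAt_id s).smul_const v).const_add x

variable {E : Type*} [NormedAddCommGroup E] [InnerProductSpace ℝ E] [CompleteSpace E]

theorem gradient_neg (Φ : E → ℝ) : gradient (-Φ) = -gradient Φ := by
  funext y
  simp [gradient, Pi.neg_def]

theorem gradient_eq_toDual_symm_comp_fderiv (Φ : E → ℝ) :
    gradient Φ = (toDual ℝ E).symm ∘ fderiv ℝ Φ := rfl

theorem contDiffAt_gradient {Φ : E → ℝ} {y : E} {m : WithTop ℕ∞}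
    (hΦ : ContDiffAt ℝ (m + 1) Φ y) : ContDiffAt ℝ m (gradient Φ) y :=
  (toDual ℝ E).symm.contDiff.contDiffAt.comp y (hΦ.fderiv_right le_rfl)

theorem inner_fderiv_gradient_apply_s9 (Φ : E → ℝ) (y u w : E) :
    ⟪fderiv ℝ (gradient Φ) y u, w⟫ = fderiv ℝ (fderiv ℝ Φ) y u w := by
  rw [gradient_eq_toDual_symm_comp_fderiv, (toDual ℝ E).symm.comp_fderiv]
  exact toDual_symm_apply

theorem inner_fderiv_gradient_comm {Φ : E → ℝ} {y : E}
    (hΦ : ContDiffAt ℝ 2 Φ y) (v w : E) :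
    ⟪fderiv ℝ (gradient Φ) y v, w⟫ = ⟪fderiv ℝ (gradient Φ) y w, v⟫ := by
  rw [inner_fderiv_gradient_apply_s9, inner_fderiv_gradient_apply_s9]
  exact hΦ.isSymmSndFDerivAt (by simp) v w

theorem fderiv_gradient_apply_gradient_eq_zero {Φ : E → ℝ} {y : E}
    (hΦ : ContDiffAt ℝ 2 Φ y) (heik : ∀ᶠ z in 𝓝 y, ‖gradient Φ z‖ = 1) :
    fderiv ℝ (gradient Φ) y (gradient Φ y) = 0 := by
  set B := fderiv ℝ (gradient Φ) y
  have hG : HasFDerivAt (gradient Φ) B y :=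
    (contDiffAt_gradient (m := 1) hΦ).differentiableAt one_ne_zero |>.hasFDerivAt
  have hconst : HasFDerivAt (‖gradient Φ ·‖ ^ 2) (0 : E →L[ℝ] ℝ) y :=
    (hasFDerivAt_const (1 : ℝ) y).congr_of_eventuallyEq
      (heik.mono fun z hz => by simp only [hz, one_pow])
  have horth : ∀ w, ⟪B w, gradient Φ y⟫ = 0 := fun w => by
    have := congrArg (· w) (hG.norm_sq.unique hconst)
    simpa [real_inner_comm] using this
  rw [← inner_self_eq_zero (𝕜 := ℝ), inner_fderiv_gradient_comm hΦ, horth]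

variable {Ω : Set E} {Φ : E → ℝ}

theorem contDiffOn_gradient (hΩ : IsOpen Ω) (hΦ : ContDiffOn ℝ 2 Φ Ω) :
    ContDiffOn ℝ 1 (gradient Φ) Ω := fun _ hy =>
  (contDiffAt_gradient (hΦ.contDiffAt (hΩ.mem_nhds hy))).contDiffWithinAt

theorem gradient_add_smul_gradient_eq (hΩ : IsOpen Ω) (hΦ : ContDiffOn ℝ 2 Φ Ω)
    (heik : ∀ y ∈ Ω, ‖gradient Φ y‖ = 1) {x : E} {c : ℝ}
    (hseg : ∀ s ∈ Icc 0 c, x + s • gradient Φ x ∈ Ω) :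
    ∀ s ∈ Icc 0 c, gradient Φ (x + s • gradient Φ x) = gradient Φ x := by
  set v := gradient Φ x
  set γ : ℝ → E := fun s => x + s • v
  have hγ : Continuous γ := by fun_prop
  have hG := contDiffOn_gradient hΩ hΦ
  set B := fderiv ℝ (gradient Φ)
  obtain ⟨K, hK⟩ : ∃ K, ∀ s ∈ Icc 0 c, ‖B (γ s)‖ ≤ K :=
    isCompact_Icc.exists_bound_of_continuousOn
      ((hG.continuousOn_fderiv_of_isOpen hΩ le_rfl).comp hγ.continuousOn hseg)
  have hderiv : ∀ s ∈ Icc 0 c,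
      HasDerivAt (fun s => gradient Φ (γ s) - v) (-B (γ s) (gradient Φ (γ s) - v)) s := by
    intro s hs
    have hγΩ : Ω ∈ 𝓝 (γ s) := hΩ.mem_nhds (hseg s hs)
    have hBγ : B (γ s) (gradient Φ (γ s)) = 0 :=
      fderiv_gradient_apply_gradient_eq_zero (hΦ.contDiffAt hγΩ) (eventually_of_mem hγΩ heik)
    have hGγ := ((hG.differentiableOn one_ne_zero).differentiableAt hγΩ).hasFDerivAt
    simpa [map_sub, hBγ] using (hGγ.comp_hasDerivAt s (hasDerivAt_add_smul x v s)).sub_const v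
  intro s hs
  refine sub_eq_zero.mp <| eq_zero_of_abs_deriv_le_mul_abs_self_of_eq_zero_right (K := K)
    ((hG.continuousOn.comp hγ.continuousOn hseg).sub continuousOn_const)
    (fun s hs => (hderiv s (Ico_subset_Icc_self hs)).hasDerivWithinAt) (by simp [γ, v])
    (fun s hs => ?_) s hs
  rw [norm_neg]
  exact (B (γ s)).le_of_opNorm_le (hK s (Ico_subset_Icc_self hs)) _

theorem apply_add_smul_gradient_eq_of_nonneg (hΩ : IsOpen Ω) (hΦ : ContDiffOn ℝ 2 Φ Ω)
    (heik : ∀ y ∈ Ω, ‖gradient Φ y‖ = 1) {x : E} {c : ℝ} (hc : 0 ≤ c)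
    (hseg : ∀ s ∈ Icc 0 c, x + s • gradient Φ x ∈ Ω) :
    Φ (x + c • gradient Φ x) = Φ x + c := by
  set v := gradient Φ x
  set γ : ℝ → E := fun s => x + s • v
  have hγ : Continuous γ := by fun_prop
  have hv : ‖v‖ = 1 := heik x (by simpa using hseg 0 ⟨le_rfl, hc⟩)
  have hderiv : ∀ s ∈ Icc 0 c, HasDerivAt (fun s => Φ (γ s)) 1 s := by
    intro s hs
    have := ((hΦ.differentiableOn two_ne_zero).differentiableAt
      (hΩ.mem_nhds (hseg s hs))).hasFDerivAt.comp_hasDerivAt s (hasDerivAt_add_smul x v s)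
    rwa [← toDual_gradient, toDual_apply_apply,
      gradient_add_smul_gradient_eq hΩ hΦ heik hseg s hs, real_inner_self_eq_norm_sq, hv,
      one_pow] at this
  refine eq_of_has_deriv_right_eq (f' := fun _ => 1) (g := fun s => Φ x + s)
    (fun s hs => (hderiv s (Ico_subset_Icc_self hs)).hasDerivWithinAt)
    (fun s _ => ((hasDerivAt_id s).const_add (Φ x)).hasDerivWithinAt)
    (hΦ.continuousOn.comp hγ.continuousOn hseg) (by fun_prop) (by simp [γ]) c ⟨hc, le_rfl⟩

theorem apply_add_smul_gradient_eq (hΩ : IsOpen Ω) (hΦ : ContDiffOn ℝ 2 Φ Ω)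
    (heik : ∀ y ∈ Ω, ‖gradient Φ y‖ = 1) {x : E} {t : ℝ}
    (hseg : ∀ s ∈ uIcc 0 t, x + s • gradient Φ x ∈ Ω) :
    Φ (x + t • gradient Φ x) = Φ x + t := by
  rcases le_total 0 t with ht | ht
  · exact apply_add_smul_gradient_eq_of_nonneg hΩ hΦ heik ht (by rwa [← uIcc_of_le ht])
  · have hseg' : ∀ s ∈ Icc 0 (-t), x + s • gradient (-Φ) x ∈ Ω := fun s hs => by
      rw [uIcc_of_ge ht] at hseg
      simpa [gradient_neg] using hseg (-s) ⟨by linarith [hs.2], by linarith [hs.1]⟩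
    have := apply_add_smul_gradient_eq_of_nonneg (Φ := -Φ) hΩ hΦ.neg
      (by simpa [gradient_neg] using heik) (neg_nonneg.mpr ht) hseg'
    simp only [gradient_neg, Pi.neg_apply, smul_neg, neg_smul, neg_neg] at this
    linarith

theorem eikonal_bvp_unique_general {n : ℕ}
    (Ω S : Set (EuclideanSpace ℝ (Fin n))) (hΩ : IsOpen Ω)
    (ν : EuclideanSpace ℝ (Fin n) → EuclideanSpace ℝ (Fin n))
    (hcover : ∀ y ∈ Ω, ∃ x ∈ S, ∃ t : ℝ, y = x + t • ν x ∧
      ∀ s ∈ Set.uIcc (0 : ℝ) t, x + s • ν x ∈ Ω)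
    (Φ₁ Φ₂ : EuclideanSpace ℝ (Fin n) → ℝ)
    (hΦ₁ : ContDiffOn ℝ 2 Φ₁ Ω) (hΦ₂ : ContDiffOn ℝ 2 Φ₂ Ω)
    (heik₁ : ∀ y ∈ Ω, ‖gradient Φ₁ y‖ = 1) (heik₂ : ∀ y ∈ Ω, ‖gradient Φ₂ y‖ = 1)
    (hzero₁ : ∀ x ∈ S, Φ₁ x = 0) (hzero₂ : ∀ x ∈ S, Φ₂ x = 0)
    (hgrad₁ : ∀ x ∈ S, gradient Φ₁ x = ν x) (hgrad₂ : ∀ x ∈ S, gradient Φ₂ x = ν x) :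
    (∀ y ∈ Ω, Φ₁ y = Φ₂ y) ∧
    (∀ x ∈ S, ∀ t : ℝ, (∀ s ∈ Set.uIcc (0 : ℝ) t, x + s • ν x ∈ Ω) →
      Φ₁ (x + t • ν x) = t ∧ Φ₂ (x + t • ν x) = t) := by
  have normal_coord : ∀ Φ : EuclideanSpace ℝ (Fin n) → ℝ, ContDiffOn ℝ 2 Φ Ω →
      (∀ y ∈ Ω, ‖gradient Φ y‖ = 1) → (∀ x ∈ S, Φ x = 0) →
      (∀ x ∈ S, gradient Φ x = ν x) → ∀ x ∈ S, ∀ t : ℝ,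
      (∀ s ∈ uIcc (0 : ℝ) t, x + s • ν x ∈ Ω) → Φ (x + t • ν x) = t := by
    intro Φ hΦ heik hzero hgrad x hx t hseg
    rw [← hgrad x hx] at hseg ⊢
    rw [apply_add_smul_gradient_eq hΩ hΦ heik hseg, hzero x hx, zero_add]
  have h₁ := normal_coord Φ₁ hΦ₁ heik₁ hzero₁ hgrad₁
  have h₂ := normal_coord Φ₂ hΦ₂ heik₂ hzero₂ hgrad₂
  refine ⟨fun y hy => ?_, fun x hx t hseg => ⟨h₁ x hx t hseg, h₂ x hx t hseg⟩⟩
  obtain ⟨x, hx, t, rfl, hseg⟩ := hcover y hy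
  rw [h₁ x hx t hseg, h₂ x hx t hseg]

/-- Uniqueness for the eikonal boundary value problem: if the open set `Ω` is covered by
the normal segments emanating from `S` and `Φ₁, Φ₂` are `C²` solutions of `‖∇Φ‖ = 1`
with `Φᵢ = 0` and `∇Φᵢ = ν` on `S`, then `Φ₁ = Φ₂` on `Ω`; in fact
`Φᵢ(x + tν(x)) = t` for every such normal representation. -/
theorem eikonal_bvp_unique {n : ℕ}
    (Ω S : Set (EuclideanSpace ℝ (Fin n))) (hΩ : IsOpen Ω) (hSΩ : S ⊆ Ω)
    (ν : EuclideanSpace ℝ (Fin n) → EuclideanSpace ℝ (Fin n))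
    (hν : ∀ x ∈ S, ‖ν x‖ = 1)
    (hcover : ∀ y ∈ Ω, ∃ x ∈ S, ∃ t : ℝ, y = x + t • ν x ∧
      ∀ s ∈ Set.uIcc (0 : ℝ) t, x + s • ν x ∈ Ω)
    (Φ₁ Φ₂ : EuclideanSpace ℝ (Fin n) → ℝ)
    (hΦ₁ : ContDiffOn ℝ 2 Φ₁ Ω) (hΦ₂ : ContDiffOn ℝ 2 Φ₂ Ω)
    (heik₁ : ∀ y ∈ Ω, ‖gradient Φ₁ y‖ = 1) (heik₂ : ∀ y ∈ Ω, ‖gradient Φ₂ y‖ = 1)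
    (hzero₁ : ∀ x ∈ S, Φ₁ x = 0) (hzero₂ : ∀ x ∈ S, Φ₂ x = 0)
    (hgrad₁ : ∀ x ∈ S, gradient Φ₁ x = ν x) (hgrad₂ : ∀ x ∈ S, gradient Φ₂ x = ν x) :
    (∀ y ∈ Ω, Φ₁ y = Φ₂ y) ∧
    (∀ x ∈ S, ∀ t : ℝ, (∀ s ∈ Set.uIcc (0 : ℝ) t, x + s • ν x ∈ Ω) →
      Φ₁ (x + t • ν x) = t ∧ Φ₂ (x + t • ν x) = t) :=
  eikonal_bvp_unique_general Ω S hΩ ν hcover Φ₁ Φ₂ hΦ₁ hΦ₂ heik₁ heik₂ hzero₁ hzero₂ hgrad₁ hgrad₂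
end

section
/- Let N : ℝ² \ {0} → ℝ² be defined by N(x₁, x₂) = (x₁, 2x₂)/√(x₁² + 4x₂²), i.e. N is the normalized gradient ∇Ψ/‖∇Ψ‖ of Ψ(x₁, x₂) = x₁² + 2x₂² − 1, whose zero set is an ellipse. Then ∂₁N₂(x) = −2x₂x₁/(x₁² + 4x₂²)^{3/2} and ∂₂N₁(x) = −4x₁x₂/(x₁² + 4x₂²)^{3/2}; consequently ∂₁N₂(x) ≠ ∂₂N₁(x) whenever x₁ ≠ 0 and x₂ ≠ 0. In particular, the normalized gradient extension of the unit normal field of the ellipse is not a proper extension. -/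
/-!
With `D = diag(1, 2)` the field is `N = normalize ∘ D` and `∇Ψ = 2 • D`. The derivative of
`v ↦ v / ‖v‖` is `(I - n nᵀ) / ‖v‖` with `n = v / ‖v‖`, so the Jacobian of `N` at `x` is
`(I - n nᵀ) D / ‖D x‖`. Its off-diagonal entries `-aⱼ nᵢ nⱼ / ‖D x‖` are not symmetric once
the diagonal entries of `D` differ and `nᵢ nⱼ ≠ 0`.
-/

open RealInnerProductSpace Matrix NormedSpace

section Normalize

variable {E F : Type*} [NormedAddCommGroup E] [NormedSpace ℝ E]
  [NormedAddCommGroup F] [InnerProductSpace ℝ F] {f : E → F} {f' : E →L[ℝ] F} {x : E}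

theorem HasFDerivAt.norm (hf : HasFDerivAt f f' x) (hx : f x ≠ 0) :
    HasFDerivAt (fun y => ‖f y‖) (‖f x‖⁻¹ • (innerSL ℝ (f x)).comp f') x := by
  have h := hf.norm_sq.sqrt (by positivity)
  simp only [Real.sqrt_sq (norm_nonneg _)] at h
  convert h using 1
  ext v
  simp only [_root_.smul_apply, ContinuousLinearMap.comp_apply, coe_innerSL_apply, smul_eq_mul,
    one_div, _root_.mul_inv_rev, nsmul_eq_mul, Nat.cast_ofNat]
  field_simp

theorem HasFDerivAt.normalize (hf : HasFDerivAt f f' x) (hx : f x ≠ 0) :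
    HasFDerivAt (fun y => normalize (f y))
      (‖f x‖⁻¹ • (f' - ((innerSL ℝ (normalize (f x))).comp f').smulRight (normalize (f x))))
      x := by
  refine (((hasDerivAt_inv (norm_ne_zero_iff.2 hx)).comp_hasFDerivAt x
    (hf.norm hx)).fun_smul hf).congr_fderiv ?_
  ext v
  simp only [NormedSpace.normalize, Function.comp_apply, smul_smul, neg_mul, neg_smul,
    _root_.add_apply, _root_.sub_apply, _root_.smul_apply, _root_.neg_apply, map_smul,
    ContinuousLinearMap.smulRight_apply, ContinuousLinearMap.comp_apply,
    ContinuousLinearMap.smul_comp, coe_innerSL_apply, smul_eq_mul]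
  rw [smul_sub, smul_smul, sub_eq_add_neg]
  congr 3
  ring

end Normalize

section Diagonal

variable {ι : Type*} [Fintype ι] [DecidableEq ι] (a : ι → ℝ)

@[simp]
theorem toEuclideanCLM_diagonal_apply (y : EuclideanSpace ℝ ι) (i : ι) :
    toEuclideanCLM (𝕜 := ℝ) (diagonal a) y i = a i * y i := by
  rw [ofLp_toEuclideanCLM, mulVec_diagonal]

theorem toEuclideanCLM_diagonal_ne_zero {a : ι → ℝ} (ha : ∀ i, a i ≠ 0)
    {x : EuclideanSpace ℝ ι} (hx : x ≠ 0) : toEuclideanCLM (𝕜 := ℝ) (diagonal a) x ≠ 0 := by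
  refine fun h => hx (PiLp.ext fun i => ?_)
  simpa [ha i] using congrArg (· i) h

theorem hasGradientAt_sum_mul_sq_add_const (c : ℝ) (x : EuclideanSpace ℝ ι) :
    HasGradientAt (fun y : EuclideanSpace ℝ ι => ∑ i, a i * y i ^ 2 + c)
      ((2 : ℝ) • toEuclideanCLM (𝕜 := ℝ) (diagonal a) x) x := by
  rw [hasGradientAt_iff_hasFDerivAt]
  refine ((HasFDerivAt.fun_sum fun i _ =>
    ((PiLp.hasFDerivAt_apply 2 x i).pow 2).const_mul (a i)).add_const c).congr_fderiv ?_
  ext v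
  simp only [_root_.sum_apply, _root_.smul_apply, PiLp.proj_apply, map_smul, smul_eq_mul,
    InnerProductSpace.toDual_apply_apply, PiLp.inner_apply, RCLike.inner_apply, Real.ringHom_apply,
    toEuclideanCLM_diagonal_apply, Finset.mul_sum]
  exact Finset.sum_congr rfl fun i _ => by ring

theorem fderiv_normalize_toEuclideanCLM_diagonal_apply_single {x : EuclideanSpace ℝ ι}
    (hx : toEuclideanCLM (𝕜 := ℝ) (diagonal a) x ≠ 0) {i j : ι} (hij : i ≠ j) :
    fderiv ℝ (fun y => normalize (toEuclideanCLM (𝕜 := ℝ) (diagonal a) y) i) x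
        (EuclideanSpace.single j 1) =
      -(a i * a j ^ 2 * x i * x j) / ‖toEuclideanCLM (𝕜 := ℝ) (diagonal a) x‖ ^ 3 := by
  have h : HasFDerivAt (fun y => normalize (toEuclideanCLM (𝕜 := ℝ) (diagonal a) y) i) _ x :=
    (EuclideanSpace.proj i : EuclideanSpace ℝ ι →L[ℝ] ℝ).hasFDerivAt.comp x
      ((toEuclideanCLM (𝕜 := ℝ) (diagonal a)).hasFDerivAt.normalize hx)
  rw [h.fderiv]
  simp only [NormedSpace.normalize, map_smul, ContinuousLinearMap.smul_comp,
    ContinuousLinearMap.comp_smulₛₗ, map_inv₀, Real.ringHom_apply, ContinuousLinearMap.comp_sub,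
    _root_.smul_apply, _root_.sub_apply, ContinuousLinearMap.comp_apply, PiLp.proj_apply,
    toEuclideanCLM_diagonal_apply, ne_eq, hij, not_false_eq_true, PiLp.single_eq_of_ne, mul_zero,
    ContinuousLinearMap.smulRight_apply, coe_innerSL_apply, PiLp.inner_apply, PiLp.single_apply,
    mul_ite, mul_one, RCLike.inner_apply, ite_mul, zero_mul, Finset.sum_ite_eq', Finset.mem_univ,
    ↓reduceIte, smul_eq_mul, zero_sub, mul_neg]
  ring

end Diagonal

theorem norm_toEuclideanCLM_diagonal_one_two (x : EuclideanSpace ℝ (Fin 2)) :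
    ‖toEuclideanCLM (𝕜 := ℝ) (diagonal ![1, 2]) x‖ = √(x 0 ^ 2 + 4 * x 1 ^ 2) := by
  norm_num [EuclideanSpace.norm_eq, Fin.sum_univ_two, mul_pow]

theorem norm_toEuclideanCLM_diagonal_one_two_pow_three (x : EuclideanSpace ℝ (Fin 2)) :
    ‖toEuclideanCLM (𝕜 := ℝ) (diagonal ![1, 2]) x‖ ^ 3 =
      (x 0 ^ 2 + 4 * x 1 ^ 2) ^ ((3 : ℝ) / 2) := by
  rw [norm_toEuclideanCLM_diagonal_one_two, Real.sqrt_eq_rpow, ← Real.rpow_natCast,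
    ← Real.rpow_mul (by positivity)]
  norm_num

/-- The normalized gradient field `N = ∇Ψ/‖∇Ψ‖` of `Ψ(x) = x₁² + 2x₂² − 1` (whose zero
set is an ellipse), given by `N(x) = (x₁, 2x₂)/√(x₁² + 4x₂²)`, has a non-symmetric
Jacobian: `∂₁N₂(x) = −2x₂x₁/(x₁²+4x₂²)^{3/2}` and `∂₂N₁(x) = −4x₁x₂/(x₁²+4x₂²)^{3/2}`,
which differ whenever `x₁ ≠ 0` and `x₂ ≠ 0`. Hence it is not a proper extension of the
unit normal field of the ellipse. -/
theorem normalized_gradient_of_ellipse_not_proper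
    (Ψ : EuclideanSpace ℝ (Fin 2) → ℝ)
    (hΨ : ∀ x : EuclideanSpace ℝ (Fin 2), Ψ x = (x 0) ^ 2 + 2 * (x 1) ^ 2 - 1)
    (N : EuclideanSpace ℝ (Fin 2) → EuclideanSpace ℝ (Fin 2))
    (hN : ∀ x : EuclideanSpace ℝ (Fin 2),
      N x 0 = x 0 / Real.sqrt ((x 0) ^ 2 + 4 * (x 1) ^ 2) ∧
      N x 1 = 2 * x 1 / Real.sqrt ((x 0) ^ 2 + 4 * (x 1) ^ 2)) :
    (∀ x : EuclideanSpace ℝ (Fin 2), x ≠ 0 →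
      N x = ‖gradient Ψ x‖⁻¹ • gradient Ψ x) ∧
    (∀ x : EuclideanSpace ℝ (Fin 2), x ≠ 0 →
      fderiv ℝ (fun y => N y 1) x (EuclideanSpace.single 0 1)
        = -(2 * x 1 * x 0) / ((x 0) ^ 2 + 4 * (x 1) ^ 2) ^ ((3 : ℝ) / 2) ∧
      fderiv ℝ (fun y => N y 0) x (EuclideanSpace.single 1 1)
        = -(4 * x 0 * x 1) / ((x 0) ^ 2 + 4 * (x 1) ^ 2) ^ ((3 : ℝ) / 2)) ∧
    (∀ x : EuclideanSpace ℝ (Fin 2), x 0 ≠ 0 → x 1 ≠ 0 →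
      fderiv ℝ (fun y => N y 1) x (EuclideanSpace.single 0 1)
        ≠ fderiv ℝ (fun y => N y 0) x (EuclideanSpace.single 1 1)) := by
  set D := toEuclideanCLM (𝕜 := ℝ) (diagonal ![(1 : ℝ), 2])
  have hN_eq : N = fun y => normalize (D y) := by
    ext y i
    fin_cases i <;> simp [D, hN, NormedSpace.normalize, norm_toEuclideanCLM_diagonal_one_two,
      div_eq_inv_mul]
  have hgrad (x) : gradient Ψ x = (2 : ℝ) • D x := by
    have hΨ_eq : Ψ = fun y => ∑ i, ![(1 : ℝ), 2] i * y i ^ 2 + -1 := by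
      ext y
      simp only [hΨ, Fin.sum_univ_two, cons_val_zero, cons_val_one, cons_val_fin_one, one_mul]
      ring
    exact hΨ_eq ▸ (hasGradientAt_sum_mul_sq_add_const _ (-1) x).gradient
  have hD {x : EuclideanSpace ℝ (Fin 2)} (hx : x ≠ 0) : D x ≠ 0 :=
    toEuclideanCLM_diagonal_ne_zero (by simp [Fin.forall_fin_two]) hx
  have hderiv (x : EuclideanSpace ℝ (Fin 2)) (hx : x ≠ 0) :
      fderiv ℝ (fun y => N y 1) x (EuclideanSpace.single 0 1)
        = -(2 * x 1 * x 0) / ((x 0) ^ 2 + 4 * (x 1) ^ 2) ^ ((3 : ℝ) / 2) ∧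
      fderiv ℝ (fun y => N y 0) x (EuclideanSpace.single 1 1)
        = -(4 * x 0 * x 1) / ((x 0) ^ 2 + 4 * (x 1) ^ 2) ^ ((3 : ℝ) / 2) := by
    rw [hN_eq, fderiv_normalize_toEuclideanCLM_diagonal_apply_single _ (hD hx) (by decide),
      fderiv_normalize_toEuclideanCLM_diagonal_apply_single _ (hD hx) (by decide),
      ← norm_toEuclideanCLM_diagonal_one_two_pow_three]
    constructor <;> simp only [cons_val_zero, cons_val_one, cons_val_fin_one] <;> ring
  refine ⟨fun x _ => ?_, hderiv, fun x h0 h1 => ?_⟩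
  · change N x = normalize (gradient Ψ x)
    rw [hgrad, normalize_smul_of_pos two_pos, hN_eq]
  · have hx : x ≠ 0 := fun h => h0 (by simp [h])
    rw [(hderiv x hx).1, (hderiv x hx).2, ← norm_toEuclideanCLM_diagonal_one_two_pow_three, Ne,
      div_left_inj' (by simpa using hD hx)]
    intro h
    exact mul_ne_zero h0 h1 (by linarith)
end
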